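/- arXiv:math/9807157 — 4 statements merged into one kernel-verified Lean document; each statement's English description precedes it below -/
import Mathlib

section
/- Let h be a complex number with exp(h) ≠ 1 and set [x] = (exp(hx/2) − exp(−hx/2))/(exp(h/2) − exp(−h/2)) for x ∈ ℂ. For all complex numbers a, b such that [a−b+1] ≠ 0 and [a−b−1] ≠ 0, one has ([a−1][b−1] − [2][a][b−1] + [a][b])/[a−b+1] + ([a−1][b−1] − [2][a−1][b] + [a][b])/[a−b−1] = 0. (Identity (26) of the paper.) -/
/-!
Writing `q = exp (h/2)`, `u = exp (h a/2)`, `v = exp (h b/2)`, every bracket in the identity is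
`(t - t⁻¹)/(q - q⁻¹)` for a Laurent monomial `t` in `q, u, v`, and a direct expansion gives the
three-term relation `[a-1][b-1] - [2][a][b-1] + [a][b] = [a-b+1]` (in hyperbolic form,
`sinh α sinh β - sinh (α+γ) sinh (β-γ) = sinh γ sinh (α-β+γ)`). Since the bracket is odd, swapping
`a` and `b` turns it into `[a-1][b-1] - [2][a-1][b] + [a][b] = -[a-b-1]`, so the two summands of
the identity are `1` and `-1`.
-/

/-- The q-bracket `[x] = (exp(hx/2) - exp(-hx/2))/(exp(h/2) - exp(-h/2))`. -/
noncomputable def qbr (h x : ℂ) : ℂ :=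
  (Complex.exp (h * x / 2) - Complex.exp (-(h * x) / 2)) /
    (Complex.exp (h / 2) - Complex.exp (-h / 2))

open Complex

theorem qbr_eq (h x : ℂ) :
    qbr h x = (exp (h * x / 2) - (exp (h * x / 2))⁻¹) / (exp (h / 2) - (exp (h / 2))⁻¹) := by
  simp only [qbr, neg_div, exp_neg]

theorem qbr_neg (h x : ℂ) : qbr h (-x) = -qbr h x := by
  rw [qbr_eq, qbr_eq, mul_neg, neg_div, exp_neg, inv_inv, ← neg_div, neg_sub]

theorem qbr_sub_add_one (h a b : ℂ) :
    qbr h (a - b + 1) = qbr h (a - 1) * qbr h (b - 1) - qbr h 2 * qbr h a * qbr h (b - 1)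
      + qbr h a * qbr h b := by
  rw [show (2 : ℂ) = 1 + 1 by norm_num]
  simp only [qbr_eq, mul_add, mul_sub, add_div, sub_div, exp_add, exp_sub, mul_one]
  generalize exp (h / 2) = q, exp (h * a / 2) = u, exp (h * b / 2) = v
  rcases eq_or_ne (q - q⁻¹) 0 with hd | hd
  · simp [hd]
  · have hq : q ≠ 0 := by rintro rfl; simp at hd
    have hq2 : q ^ 2 - 1 ≠ 0 := by
      contrapose! hd
      field_simp
      linear_combination hd
    field_simp
    ring

theorem qbr_sub_sub_one (h a b : ℂ) :
    qbr h (a - b - 1) = -(qbr h (a - 1) * qbr h (b - 1) - qbr h 2 * qbr h (a - 1) * qbr h b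
      + qbr h a * qbr h b) := by
  rw [show a - b - 1 = -(b - a + 1) by ring, qbr_neg, qbr_sub_add_one]
  ring

theorem identity_26_general (h : ℂ) (a b : ℂ)
    (h1 : qbr h (a - b + 1) ≠ 0) (h2 : qbr h (a - b - 1) ≠ 0) :
    (qbr h (a - 1) * qbr h (b - 1) - qbr h 2 * qbr h a * qbr h (b - 1)
        + qbr h a * qbr h b) / qbr h (a - b + 1)
      + (qbr h (a - 1) * qbr h (b - 1) - qbr h 2 * qbr h (a - 1) * qbr h b
        + qbr h a * qbr h b) / qbr h (a - b - 1) = 0 := by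
  rw [← qbr_sub_add_one, neg_eq_iff_eq_neg.mp (qbr_sub_sub_one h a b).symm, div_self h1,
    neg_div, div_self h2, add_neg_cancel]

/-- Identity (26). -/
theorem identity_26 (h : ℂ) (hh : Complex.exp h ≠ 1) (a b : ℂ)
    (h1 : qbr h (a - b + 1) ≠ 0) (h2 : qbr h (a - b - 1) ≠ 0) :
    (qbr h (a - 1) * qbr h (b - 1) - qbr h 2 * qbr h a * qbr h (b - 1)
        + qbr h a * qbr h b) / qbr h (a - b + 1)
      + (qbr h (a - 1) * qbr h (b - 1) - qbr h 2 * qbr h (a - 1) * qbr h b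
        + qbr h a * qbr h b) / qbr h (a - b - 1) = 0 :=
  identity_26_general h a b h1 h2
end

section
/- Let h be a complex number with exp(h) ≠ 1 and set [x] = (exp(hx/2) − exp(−hx/2))/(exp(h/2) − exp(−h/2)) for x ∈ ℂ. For all complex numbers a, b, c, d such that [c−b−1] ≠ 0 and [b−c+1] ≠ 0, one has [a−b][c−d−1]/[c−b−1] + [a−c+1][b−d]/[b−c+1] = [a−d]. (First identity of (A46).) -/
theorem Complex.sinh_sub_plucker (x y z w : ℂ) :
    sinh (x - y) * sinh (z - w) + sinh (x - z) * sinh (w - y) + sinh (x - w) * sinh (y - z)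
      = 0 := by
  simp only [Complex.sinh_sub]
  ring

namespace qbr

theorem eq_sinh_div (h x : ℂ) : qbr h x = Complex.sinh (h * x / 2) / Complex.sinh (h / 2) := by
  simp only [qbr, Complex.sinh, neg_div]
  field_simp

theorem neg (h x : ℂ) : qbr h (-x) = -qbr h x := by
  simp only [eq_sinh_div, mul_neg, neg_div, Complex.sinh_neg]

theorem sub_plucker (h x y z w : ℂ) :
    qbr h (x - y) * qbr h (z - w) + qbr h (x - z) * qbr h (w - y)
      + qbr h (x - w) * qbr h (y - z) = 0 := by
  simp only [eq_sinh_div, mul_sub, sub_div]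
  linear_combination Complex.sinh_sub_plucker (h * x / 2) (h * y / 2) (h * z / 2) (h * w / 2) / Complex.sinh (h / 2) ^ 2

end qbr

theorem identity_A46_first_general (h : ℂ) (a b c d : ℂ)
    (h1 : qbr h (c - b - 1) ≠ 0) :
    qbr h (a - b) * qbr h (c - d - 1) / qbr h (c - b - 1)
      + qbr h (a - c + 1) * qbr h (b - d) / qbr h (b - c + 1) = qbr h (a - d) := by
  have plucker := qbr.sub_plucker h a b (c - 1) d
  rw [show c - 1 - d = c - d - 1 by ring, show a - (c - 1) = a - c + 1 by ring,
    show d - b = -(b - d) by ring, show b - (c - 1) = -(c - b - 1) by ring, qbr.neg,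
    qbr.neg] at plucker
  rw [show b - c + 1 = -(c - b - 1) by ring, qbr.neg]
  field_simp
  linear_combination plucker

/-- First identity of (A46). -/
theorem identity_A46_first (h : ℂ) (hh : Complex.exp h ≠ 1) (a b c d : ℂ)
    (h1 : qbr h (c - b - 1) ≠ 0) (h2 : qbr h (b - c + 1) ≠ 0) :
    qbr h (a - b) * qbr h (c - d - 1) / qbr h (c - b - 1)
      + qbr h (a - c + 1) * qbr h (b - d) / qbr h (b - c + 1) = qbr h (a - d) :=
  identity_A46_first_general h a b c d h1
end

section
/- Let q be a nonzero complex number with q² ≠ 1, let n ≥ 1 be an integer, and let A₁, …, A_n be complex numbers such that the 2n numbers A₁, …, A_n, q²A₁, …, q²A_n are pairwise distinct. Let B₁, …, B_{n−1} and C₁, …, C_{n−1} be arbitrary complex numbers. Then ∑_{i=1}^{n} (1/A_i) · ( ( ∏_{t=1}^{n−1} (A_i − q²B_t)(A_i − q²C_t) ) / ( ∏_{t≠i, t=1}^{n} (A_i − A_t)(A_i − q²A_t) ) − ( ∏_{t=1}^{n−1} (A_i − B_t)(A_i − C_t) ) / ( ∏_{t≠i, t=1}^{n} (A_i − A_t)(A_i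 − q⁻²A_t) ) ) = 0. (Identity (A29), the rational form of identity (A26); note each A_i ≠ 0 since A_i ≠ q²A_i.) -/
/-!
Put `p = q²`. The `2n` numbers `A_t` and `p⁻¹ A_t` are distinct, so for any polynomial `R` of
degree at most `2n - 2` the Lagrange sum `∑_x R(x) / ∏_{y ≠ x} (x - y)` over these nodes, being
the coefficient of `X^(2n-1)` in `R`, vanishes. For `R = ∏_t (X - B_t)(X - C_t)` the two terms at
`A_i` and `p⁻¹ A_i` add up to `p / (1 - p)` times the `i`-th summand of the identity: evaluating
`R` at `p⁻¹ A_i` produces the factor `p^(2n-2)` that turns `B_t, C_t` into `p B_t, p C_t`.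
-/

open Finset Polynomial

namespace Lagrange

variable {F ι : Type*} [Field F] [DecidableEq ι] {s : Finset ι} {v : ι → F}

theorem sum_eval_div_prod_erase_eq_coeff (hvs : Set.InjOn v s) {P : F[X]}
    (hP : P.degree < #s) :
    ∑ i ∈ s, P.eval (v i) / ∏ j ∈ s.erase i, (v i - v j) = P.coeff (#s - 1) := by
  conv_rhs => rw [eq_interpolate hvs hP, interpolate_apply, finsetSum_coeff]
  refine sum_congr rfl fun i hi => ?_
  rw [coeff_C_mul, ← natDegree_basis hvs hi, coeff_natDegree, leadingCoeff_basis hvs hi,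
    div_eq_mul_inv]

end Lagrange

namespace Finset

variable {α β : Type*} [DecidableEq α] [DecidableEq β] (s : Finset α) (t : Finset β)

theorem erase_inl_disjSum (i : α) :
    (s.disjSum t).erase (Sum.inl i) = (s.erase i).disjSum t := by
  ext (x | x) <;> simp

theorem erase_inr_disjSum (i : β) :
    (s.disjSum t).erase (Sum.inr i) = s.disjSum (t.erase i) := by
  ext (x | x) <;> simp

theorem prod_mul_sub_mul {ι R : Type*} [CommRing R] (s : Finset ι) (c x : R) (y : ι → R) :
    ∏ t ∈ s, (c * x - c * y t) = c ^ #s * ∏ t ∈ s, (x - y t) := by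
  simp_rw [← mul_sub, prod_mul_distrib, prod_const]

end Finset

section QShift

variable {F ι : Type*} [Field F] {s : Finset ι} {p : F} {A : ι → F} {i : ι}

def qShiftNodes (p : F) (A : ι → F) : ι ⊕ ι → F :=
  Sum.elim A fun t => p⁻¹ * A t

theorem injOn_qShiftNodes (hp : p ≠ 0) (hA : Set.InjOn A s)
    (hAp : ∀ i ∈ s, ∀ t ∈ s, A i ≠ p * A t) : Set.InjOn (qShiftNodes p A) (s.disjSum s) := by
  rintro (a | a) ha (b | b) hb hab <;>
    simp only [mem_coe, inl_mem_disjSum, inr_mem_disjSum] at ha hb <;>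
    simp only [qShiftNodes, Sum.elim_inl, Sum.elim_inr] at hab
  · rw [hA ha hb hab]
  · exact absurd (by rw [hab, mul_inv_cancel_left₀ hp]) (hAp b hb a ha)
  · exact absurd (by rw [← hab, mul_inv_cancel_left₀ hp]) (hAp a ha b hb)
  · rw [hA ha hb (mul_left_cancel₀ (inv_ne_zero hp) hab)]

variable [DecidableEq ι]

theorem prod_erase_inl_qShiftNodes (hi : i ∈ s) :
    ∏ j ∈ (s.disjSum s).erase (.inl i), (qShiftNodes p A (.inl i) - qShiftNodes p A j) =
      (∏ t ∈ s.erase i, (A i - A t)) *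
        ((A i - p⁻¹ * A i) * ∏ t ∈ s.erase i, (A i - p⁻¹ * A t)) := by
  rw [erase_inl_disjSum, prod_disjSum, mul_prod_erase s (fun t => A i - p⁻¹ * A t) hi]
  rfl

theorem prod_erase_inr_qShiftNodes (hp : p ≠ 0) (hi : i ∈ s) :
    ∏ j ∈ (s.disjSum s).erase (.inr i), (qShiftNodes p A (.inr i) - qShiftNodes p A j) =
      p⁻¹ ^ #s * ((A i - p * A i) * ∏ t ∈ s.erase i, (A i - p * A t)) *
        (p⁻¹ ^ (#s - 1) * ∏ t ∈ s.erase i, (A i - A t)) := by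
  rw [erase_inr_disjSum, prod_disjSum, mul_prod_erase s (fun t => A i - p * A t) hi,
    ← card_erase_of_mem hi, ← prod_mul_sub_mul, ← prod_mul_sub_mul]
  simp only [qShiftNodes, Sum.elim_inl, Sum.elim_inr, inv_mul_cancel_left₀ hp]

theorem inv_mul_qDifference_eq_residues (hp : p ≠ 0) (hp1 : p ≠ 1) (hA : Set.InjOn A s)
    (hAp : ∀ i ∈ s, ∀ t ∈ s, A i ≠ p * A t) {m : ℕ} (hs : #s = m + 1) (hi : i ∈ s) (R : F[X]) :
    1 / A i * (p ^ (2 * m) * R.eval (p⁻¹ * A i) / ∏ t ∈ s.erase i, (A i - A t) * (A i - p * A t)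
        - R.eval (A i) / ∏ t ∈ s.erase i, (A i - A t) * (A i - p⁻¹ * A t)) =
      (1 - p) / p *
        (R.eval (qShiftNodes p A (.inl i)) / ∏ j ∈ (s.disjSum s).erase (.inl i),
            (qShiftNodes p A (.inl i) - qShiftNodes p A j) +
          R.eval (qShiftNodes p A (.inr i)) / ∏ j ∈ (s.disjSum s).erase (.inr i),
            (qShiftNodes p A (.inr i) - qShiftNodes p A j)) := by
  have ha : A i ≠ 0 := fun h => hAp i hi i hi (by rw [h, mul_zero])
  have hD : ∏ t ∈ s.erase i, (A i - A t) ≠ 0 := prod_ne_zero_iff.2 fun t ht =>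
    sub_ne_zero.2 fun h => ne_of_mem_erase ht (hA (mem_of_mem_erase ht) hi h.symm)
  have hDp : ∏ t ∈ s.erase i, (A i - p * A t) ≠ 0 := prod_ne_zero_iff.2 fun t ht =>
    sub_ne_zero.2 (hAp i hi t (mem_of_mem_erase ht))
  have hDu : ∏ t ∈ s.erase i, (A i - p⁻¹ * A t) ≠ 0 := prod_ne_zero_iff.2 fun t ht =>
    sub_ne_zero.2 fun h => hAp t (mem_of_mem_erase ht) i hi (by rw [h, mul_inv_cancel_left₀ hp])
  have h1 : 1 - p ≠ 0 := sub_ne_zero.2 hp1.symm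
  rw [prod_erase_inl_qShiftNodes hi, prod_erase_inr_qShiftNodes hp hi, prod_mul_distrib,
    prod_mul_distrib, hs, Nat.add_sub_cancel, ← one_sub_mul, ← one_sub_mul]
  simp only [qShiftNodes, Sum.elim_inl, Sum.elim_inr]
  generalize ∏ t ∈ s.erase i, (A i - A t) = D at hD ⊢
  generalize ∏ t ∈ s.erase i, (A i - p * A t) = Dp at hDp ⊢
  generalize ∏ t ∈ s.erase i, (A i - p⁻¹ * A t) = Du at hDu ⊢
  simp only [inv_pow]
  field_simp
  ring

theorem sum_inv_mul_qDifference_eq_zero (hp : p ≠ 0) (hp1 : p ≠ 1) (hA : Set.InjOn A s)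
    (hAp : ∀ i ∈ s, ∀ t ∈ s, A i ≠ p * A t) {m : ℕ} (hs : #s = m + 1) {R : F[X]}
    (hR : R.natDegree ≤ 2 * m) :
    ∑ i ∈ s, 1 / A i *
      (p ^ (2 * m) * R.eval (p⁻¹ * A i) / ∏ t ∈ s.erase i, (A i - A t) * (A i - p * A t)
        - R.eval (A i) / ∏ t ∈ s.erase i, (A i - A t) * (A i - p⁻¹ * A t)) = 0 := by
  have hcard : #(s.disjSum s) = 2 * m + 2 := by rw [card_disjSum, hs]; ring
  have hdeg : R.degree < #(s.disjSum s) :=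
    degree_le_natDegree.trans_lt (by rw [hcard]; exact_mod_cast hR.trans_lt (by omega))
  have hres := Lagrange.sum_eval_div_prod_erase_eq_coeff (injOn_qShiftNodes hp hA hAp) hdeg
  rw [coeff_eq_zero_of_natDegree_lt (by omega), sum_disjSum] at hres
  rw [sum_congr rfl fun i hi => inv_mul_qDifference_eq_residues hp hp1 hA hAp hs hi R,
    ← mul_sum, sum_add_distrib, hres, mul_zero]

theorem pow_card_mul_eval_nodal_inv_mul {κ : Type*} (hp : p ≠ 0) (T : Finset κ) (b : κ → F)
    (x : F) : p ^ #T * (Lagrange.nodal T b).eval (p⁻¹ * x) = ∏ t ∈ T, (x - p * b t) := by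
  rw [Lagrange.eval_nodal, ← prod_mul_sub_mul, mul_inv_cancel_left₀ hp]

end QShift

/-- Identity (A29). -/
theorem identity_A29 (q : ℂ) (hq : q ≠ 0) (hq2 : q ^ 2 ≠ 1) (n : ℕ) (hn : 1 ≤ n)
    (A B C : ℕ → ℂ)
    (hAA : ∀ i ∈ Finset.Icc 1 n, ∀ t ∈ Finset.Icc 1 n, i ≠ t → A i ≠ A t)
    (hAq : ∀ i ∈ Finset.Icc 1 n, ∀ t ∈ Finset.Icc 1 n, A i ≠ q ^ 2 * A t) :
    ∑ i ∈ Finset.Icc 1 n, (1 / A i) *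
      ((∏ t ∈ Finset.Icc 1 (n - 1), (A i - q ^ 2 * B t) * (A i - q ^ 2 * C t)) /
          (∏ t ∈ (Finset.Icc 1 n).erase i, (A i - A t) * (A i - q ^ 2 * A t))
        - (∏ t ∈ Finset.Icc 1 (n - 1), (A i - B t) * (A i - C t)) /
          ∏ t ∈ (Finset.Icc 1 n).erase i, (A i - A t) * (A i - (q ^ 2)⁻¹ * A t)) = 0 := by
  set p := q ^ 2
  have hp : p ≠ 0 := pow_ne_zero 2 hq
  have hA : Set.InjOn A (Icc 1 n) := fun i hi t ht h => by_contra fun hit => hAA i hi t ht hit h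
  set T := Icc 1 (n - 1)
  have hs : #(Icc 1 n) = #T + 1 := by simp [T]; omega
  set R := Lagrange.nodal T B * Lagrange.nodal T C
  have hR : R.natDegree ≤ 2 * #T :=
    natDegree_mul_le.trans (by rw [Lagrange.natDegree_nodal, Lagrange.natDegree_nodal, two_mul])
  refine (sum_congr rfl fun i _ => ?_).trans (sum_inv_mul_qDifference_eq_zero hp hq2 hA hAq hs hR)
  rw [eval_mul, eval_mul, two_mul, pow_add, mul_mul_mul_comm, pow_card_mul_eval_nodal_inv_mul hp,
    pow_card_mul_eval_nodal_inv_mul hp, Lagrange.eval_nodal, Lagrange.eval_nodal,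
    ← prod_mul_distrib, ← prod_mul_distrib]
end

section
/- Let q be a nonzero complex number, let n ≥ 2 be an integer, fix l ∈ {1, …, n}, and let A₁, …, A_{n−1}, B₁, …, B_n, D₁, …, D_{n−2} be complex numbers such that all A_j are nonzero and the 2n−1 numbers q⁻²B_l, A₁, …, A_{n−1}, q²A₁, …, q²A_{n−1} are pairwise distinct. Then the sum G_{n,l} = ∑_{j=1}^{n−1} ( ∏_{i≠l, i=1}^{n} (A_j − B_i) · ∏_{i=1}^{n−2} (A_j − D_i) ) / ( A_j · (B_l − q²A_j) · ∏_{i≠j, i=1}^{n−1} (A_j − A_i)(A_j − q²A_i) ) equals (q⁻² − 1) · ( ∏_{i≠l, i=1}^{n} (B_l − q²B_i) · ∏_{i=1}^{n−2} (q⁻²B_l − D_i) ) / ( ∏_{i=1}^{n−1} (B_l − q²A_i)(q⁻²B_l − q²A_i) ) − ∑_{j=1}^{n−1} ( ∏_{i≠l, i=1}^{n} (A_j − q⁻²B_i) · ∏_{i=1}^{n−2} (A_j − q⁻²D_i) ) / ( A_j · (q²A_j − q⁻²B_l) · ∏_{i≠j, i=1}^{n−1} (A_j − A_i)(A_j − q⁻²A_i)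 ). (Identity (A18), obtained from the vanishing of the sum of all residues of the rational function f₂(z) = ∏_{i≠l}(z − B_i)·∏_{i=1}^{n−2}(z − D_i) / ( (z − q⁻²B_l)·∏_{i=1}^{n−1}(z − A_i)(z − q²A_i) ).) -/
/-!
Let P(z) = ∏_{i ≠ l} (z - B_i) ∏_i (z - D_i) and c = q². Up to the common factor c/(c - 1), the
terms of the two sums over j are the residues of f₂ = P / ((z - c⁻¹B_l) ∏_i (z - A_i)(z - c A_i))
at A_j and at c A_j, and the remaining term is (c⁻¹ - 1) times its residue at c⁻¹B_l. All poles
are simple and deg P is two less than the degree of the denominator, so the residues sum to zero: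
their sum is the coefficient of z^(N-1) in the Lagrange interpolant of P on the N poles, that is,
in P itself.
-/

open Polynomial Finset Lagrange

section PartialFractions

variable {F ι : Type*} [Field F] {c : F}

theorem sum_eval_div_eval_derivative_nodal_eq_zero [DecidableEq ι] {s : Finset ι}
    {v : ι → F} (hvs : Set.InjOn v s) {P : F[X]} (hP : P.degree < ↑(#s - 1)) :
    ∑ i ∈ s, P.eval (v i) / (nodal s v).derivative.eval (v i) = 0 := by
  have hP' : P.degree < #s := hP.trans_le (by exact_mod_cast Nat.sub_le _ _)
  rw [← coeff_eq_zero_of_degree_lt hP, coeff_eq_sum hvs hP']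
  refine sum_congr rfl fun i hi => ?_
  rw [eval_nodal_derivative_eval_node_eq hi, eval_nodal]

theorem eval_derivative_mul_of_eval_eq_zero {R : Type*} [CommRing R] {p q : R[X]} {x : R}
    (hp : p.eval x = 0) : (p * q).derivative.eval x = p.derivative.eval x * q.eval x := by
  simp [derivative_mul, hp]

theorem nodal_image_id [DecidableEq F] {s : Finset ι} {a : ι → F}
    (ha : Set.InjOn a s) : nodal (s.image a) id = nodal s a := by
  simp only [nodal_eq, prod_image ha, id]

theorem sum_residues_eq_zero_of_degree_lt [DecidableEq ι] (S : Finset ι)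
    (a a' : ι → F) (b : F) (ha : Set.InjOn a S) (ha' : Set.InjOn a' S)
    (hba : ∀ i ∈ S, b ≠ a i) (hba' : ∀ i ∈ S, b ≠ a' i) (haa' : ∀ i ∈ S, ∀ j ∈ S, a i ≠ a' j)
    (P : F[X]) (hP : P.degree < ↑(2 * #S)) :
    P.eval b / ∏ i ∈ S, (b - a i) * (b - a' i)
      + ∑ j ∈ S, P.eval (a j) /
          ((a j - b) * (∏ i ∈ S.erase j, (a j - a i)) * ∏ i ∈ S, (a j - a' i))
      + ∑ j ∈ S, P.eval (a' j) /
          ((a' j - b) * (∏ i ∈ S, (a' j - a i)) * ∏ i ∈ S.erase j, (a' j - a' i)) = 0 := by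
  classical
  have hb : b ∉ S.image a ∪ S.image a' := by
    simp only [mem_union, mem_image, not_or, not_exists, not_and]
    exact ⟨fun i hi h => hba i hi h.symm, fun i hi h => hba' i hi h.symm⟩
  have hdisj : Disjoint (S.image a) (S.image a') := by
    simp only [disjoint_left, mem_image, not_exists, not_and]
    rintro _ ⟨i, hi, rfl⟩ j hj h
    exact haa' i hi j hj h.symm
  have hcard : #(insert b (S.image a ∪ S.image a')) - 1 = 2 * #S := by
    rw [card_insert_of_notMem hb, card_union_of_disjoint hdisj, card_image_of_injOn ha,
      card_image_of_injOn ha']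
    omega
  have hnodal : nodal (insert b (S.image a ∪ S.image a')) id
      = (X - C b) * (nodal S a * nodal S a') := by
    rw [nodal_insert_eq_nodal hb, nodal_eq, prod_union hdisj, ← nodal_eq, ← nodal_eq,
      nodal_image_id ha, nodal_image_id ha', id]
  have heval_b : (nodal S a * nodal S a').eval b = ∏ i ∈ S, (b - a i) * (b - a' i) := by
    rw [eval_mul, eval_nodal, eval_nodal, prod_mul_distrib]
  have hderiv_a : ∀ j ∈ S, ((X - C b) * (nodal S a * nodal S a')).derivative.eval (a j)
      = (a j - b) * (∏ i ∈ S.erase j, (a j - a i)) * ∏ i ∈ S, (a j - a' i) := fun j hj => by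
    rw [show (X - C b) * (nodal S a * nodal S a') = nodal S a * ((X - C b) * nodal S a') by ring,
      eval_derivative_mul_of_eval_eq_zero (eval_nodal_at_node hj),
      eval_nodal_derivative_eval_node_eq hj, eval_mul, eval_nodal, eval_nodal, eval_sub, eval_X,
      eval_C]
    ring
  have hderiv_a' : ∀ j ∈ S, ((X - C b) * (nodal S a * nodal S a')).derivative.eval (a' j)
      = (a' j - b) * (∏ i ∈ S, (a' j - a i)) * ∏ i ∈ S.erase j, (a' j - a' i) := fun j hj => by
    rw [show (X - C b) * (nodal S a * nodal S a') = nodal S a' * ((X - C b) * nodal S a) by ring,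
      eval_derivative_mul_of_eval_eq_zero (eval_nodal_at_node hj),
      eval_nodal_derivative_eval_node_eq hj, eval_mul, eval_nodal, eval_nodal, eval_sub, eval_X,
      eval_C]
    ring
  have key := sum_eval_div_eval_derivative_nodal_eq_zero (Function.injective_id.injOn)
    (hcard ▸ hP)
  rw [sum_insert hb, sum_union hdisj, sum_image ha, sum_image ha', hnodal, id,
    eval_derivative_mul_of_eval_eq_zero (by simp), heval_b] at key
  simp only [id, derivative_X_sub_C, eval_one, one_mul] at key
  rw [add_assoc, ← key]
  congr 2
  · exact sum_congr rfl fun j hj => by rw [hderiv_a j hj]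
  · exact sum_congr rfl fun j hj => by rw [hderiv_a' j hj]

theorem prod_sub_mul_eq_pow_card_mul_prod (s : Finset ι) (hc : c ≠ 0)
    (x : F) (f : ι → F) : ∏ i ∈ s, (x - c * f i) = c ^ #s * ∏ i ∈ s, (c⁻¹ * x - f i) := by
  rw [pow_card_mul_prod]
  exact prod_congr rfl fun i _ => by field_simp

theorem prod_mul_sub_eq_pow_card_mul_prod (s : Finset ι) (hc : c ≠ 0)
    (x : F) (f : ι → F) : ∏ i ∈ s, (c * x - f i) = c ^ #s * ∏ i ∈ s, (x - c⁻¹ * f i) := by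
  rw [pow_card_mul_prod]
  exact prod_congr rfl fun i _ => by field_simp

theorem residue_at_inv_mul_pole {E Ds S : Finset ι} (hc : c ≠ 0) (hE : #E = #S)
    (β : F) (a B D : ι → F) :
    (c⁻¹ - 1) * ((∏ i ∈ E, (β - c * B i)) * ∏ i ∈ Ds, (c⁻¹ * β - D i)) /
        ∏ i ∈ S, (β - c * a i) * (c⁻¹ * β - c * a i)
      = (c⁻¹ - 1) * ((∏ i ∈ E, (c⁻¹ * β - B i)) * ∏ i ∈ Ds, (c⁻¹ * β - D i)) /
        ∏ i ∈ S, (c⁻¹ * β - a i) * (c⁻¹ * β - c * a i) := by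
  rw [prod_mul_distrib, prod_sub_mul_eq_pow_card_mul_prod E hc, hE,
    prod_sub_mul_eq_pow_card_mul_prod S hc, prod_mul_distrib, mul_left_comm, mul_assoc,
    mul_assoc, mul_div_mul_left _ _ (pow_ne_zero _ hc)]
  ring

theorem residue_at_node [DecidableEq ι] {S : Finset ι} {j : ι} (hj : j ∈ S) (hc : c ≠ 0)
    (N β : F) (a : ι → F) :
    N / ((a j - c⁻¹ * β) * (∏ i ∈ S.erase j, (a j - a i)) * ∏ i ∈ S, (a j - c * a i))
      = (1 - c⁻¹)⁻¹ *
        (N / (a j * (β - c * a j) * ∏ i ∈ S.erase j, (a j - a i) * (a j - c * a i))) := by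
  have hden : (a j - c⁻¹ * β) * (∏ i ∈ S.erase j, (a j - a i)) * ∏ i ∈ S, (a j - c * a i)
      = (1 - c⁻¹) * (a j * (β - c * a j) * ∏ i ∈ S.erase j, (a j - a i) * (a j - c * a i)) := by
    rw [← mul_prod_erase S _ hj, prod_mul_distrib]
    field_simp
    ring
  rw [hden, div_mul_eq_div_div_swap, div_eq_inv_mul]

theorem residue_at_mul_node [DecidableEq ι] {E Ds S : Finset ι} {j : ι} (hj : j ∈ S)
    (hc : c ≠ 0) (hE : #E = #S) (hDs : #Ds + 1 = #S) (b : F) (a B D : ι → F) :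
    (∏ i ∈ E, (c * a j - B i)) * (∏ i ∈ Ds, (c * a j - D i)) /
        ((c * a j - b) * (∏ i ∈ S, (c * a j - a i)) * ∏ i ∈ S.erase j, (c * a j - c * a i))
      = (1 - c⁻¹)⁻¹ * (((∏ i ∈ E, (a j - c⁻¹ * B i)) * ∏ i ∈ Ds, (a j - c⁻¹ * D i)) /
        (a j * (c * a j - b) * ∏ i ∈ S.erase j, (a j - a i) * (a j - c⁻¹ * a i))) := by
  have hSj : #(S.erase j) = #Ds := by rw [card_erase_of_mem hj]; omega
  have hnum : (∏ i ∈ E, (c * a j - B i)) * (∏ i ∈ Ds, (c * a j - D i))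
      = (c ^ #S * c ^ #Ds) * ((∏ i ∈ E, (a j - c⁻¹ * B i)) * ∏ i ∈ Ds, (a j - c⁻¹ * D i)) := by
    rw [prod_mul_sub_eq_pow_card_mul_prod E hc, prod_mul_sub_eq_pow_card_mul_prod Ds hc, hE]
    ring
  have hden : (c * a j - b) * (∏ i ∈ S, (c * a j - a i)) * ∏ i ∈ S.erase j, (c * a j - c * a i)
      = (c ^ #S * c ^ #Ds * (1 - c⁻¹)) *
        (a j * (c * a j - b) * ∏ i ∈ S.erase j, (a j - a i) * (a j - c⁻¹ * a i)) := by
    rw [← mul_prod_erase S _ hj, prod_mul_sub_eq_pow_card_mul_prod _ hc, hSj, prod_mul_distrib]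
    simp_rw [← mul_sub]
    rw [← pow_card_mul_prod, hSj, ← hDs]
    field_simp
    ring
  rw [hnum, hden, mul_div_mul_comm, div_mul_cancel_left₀ (by positivity)]

end PartialFractions

theorem identity_A18_general (q : ℂ) (hq : q ≠ 0) (n : ℕ) (hn : 2 ≤ n)
    (l : ℕ) (hl : l ∈ Finset.Icc 1 n)
    (A B D : ℕ → ℂ)
    (hBlA : ∀ i ∈ Finset.Icc 1 (n - 1), (q ^ 2)⁻¹ * B l ≠ A i)
    (hBlAq : ∀ i ∈ Finset.Icc 1 (n - 1), (q ^ 2)⁻¹ * B l ≠ q ^ 2 * A i)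
    (hAA : ∀ i ∈ Finset.Icc 1 (n - 1), ∀ t ∈ Finset.Icc 1 (n - 1), i ≠ t → A i ≠ A t)
    (hAAq : ∀ i ∈ Finset.Icc 1 (n - 1), ∀ t ∈ Finset.Icc 1 (n - 1), A i ≠ q ^ 2 * A t) :
    ∑ j ∈ Finset.Icc 1 (n - 1),
      ((∏ i ∈ (Finset.Icc 1 n).erase l, (A j - B i)) *
          ∏ i ∈ Finset.Icc 1 (n - 2), (A j - D i)) /
        (A j * (B l - q ^ 2 * A j) *
          ∏ i ∈ (Finset.Icc 1 (n - 1)).erase j, (A j - A i) * (A j - q ^ 2 * A i))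
    = ((q ^ 2)⁻¹ - 1) *
        ((∏ i ∈ (Finset.Icc 1 n).erase l, (B l - q ^ 2 * B i)) *
          ∏ i ∈ Finset.Icc 1 (n - 2), ((q ^ 2)⁻¹ * B l - D i)) /
        (∏ i ∈ Finset.Icc 1 (n - 1), (B l - q ^ 2 * A i) * ((q ^ 2)⁻¹ * B l - q ^ 2 * A i))
      - ∑ j ∈ Finset.Icc 1 (n - 1),
        ((∏ i ∈ (Finset.Icc 1 n).erase l, (A j - (q ^ 2)⁻¹ * B i)) *
            ∏ i ∈ Finset.Icc 1 (n - 2), (A j - (q ^ 2)⁻¹ * D i)) /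
          (A j * (q ^ 2 * A j - (q ^ 2)⁻¹ * B l) *
            ∏ i ∈ (Finset.Icc 1 (n - 1)).erase j, (A j - A i) * (A j - (q ^ 2)⁻¹ * A i)) := by
  have hc : q ^ 2 ≠ 0 := pow_ne_zero 2 hq
  have h1 : 1 ∈ Icc 1 (n - 1) := mem_Icc.2 ⟨le_rfl, by omega⟩
  have hk : 1 - (q ^ 2)⁻¹ ≠ 0 := fun h =>
    hAAq 1 h1 1 h1 (by rw [inv_eq_one.1 (sub_eq_zero.1 h).symm, one_mul])
  have hE : #((Icc 1 n).erase l) = #(Icc 1 (n - 1)) := by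
    rw [card_erase_of_mem hl, Nat.card_Icc, Nat.card_Icc]; omega
  have hDs : #(Icc 1 (n - 2)) + 1 = #(Icc 1 (n - 1)) := by
    rw [Nat.card_Icc, Nat.card_Icc]; omega
  have hA : Set.InjOn A (Icc 1 (n - 1)) := fun i hi t ht h =>
    by_contra fun hit => hAA i hi t ht hit h
  have key := sum_residues_eq_zero_of_degree_lt (Icc 1 (n - 1)) A (fun i => q ^ 2 * A i)
    ((q ^ 2)⁻¹ * B l) hA (fun i hi t ht h => hA hi ht (mul_left_cancel₀ hc h)) hBlA hBlAq hAAq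
    (nodal ((Icc 1 n).erase l) B * nodal (Icc 1 (n - 2)) D)
    (by rw [degree_mul, degree_nodal, degree_nodal, hE, ← Nat.cast_add]; norm_cast; omega)
  simp only [eval_mul, eval_nodal] at key
  rw [sum_congr rfl fun j hj => residue_at_node hj hc _ (B l) A,
    sum_congr rfl fun j hj => residue_at_mul_node hj hc hE hDs _ A B D, ← mul_sum, ← mul_sum,
    add_assoc, ← mul_add, add_eq_zero_iff_neg_eq', neg_eq_iff_eq_neg,
    inv_mul_eq_iff_eq_mul₀ hk] at key
  rw [residue_at_inv_mul_pole hc hE]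
  linear_combination key

/-- Identity (A18). -/
theorem identity_A18 (q : ℂ) (hq : q ≠ 0) (n : ℕ) (hn : 2 ≤ n)
    (l : ℕ) (hl : l ∈ Finset.Icc 1 n)
    (A B D : ℕ → ℂ)
    (hA0 : ∀ j ∈ Finset.Icc 1 (n - 1), A j ≠ 0)
    (hBlA : ∀ i ∈ Finset.Icc 1 (n - 1), (q ^ 2)⁻¹ * B l ≠ A i)
    (hBlAq : ∀ i ∈ Finset.Icc 1 (n - 1), (q ^ 2)⁻¹ * B l ≠ q ^ 2 * A i)
    (hAA : ∀ i ∈ Finset.Icc 1 (n - 1), ∀ t ∈ Finset.Icc 1 (n - 1), i ≠ t → A i ≠ A t)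
    (hAAq : ∀ i ∈ Finset.Icc 1 (n - 1), ∀ t ∈ Finset.Icc 1 (n - 1), A i ≠ q ^ 2 * A t) :
    ∑ j ∈ Finset.Icc 1 (n - 1),
      ((∏ i ∈ (Finset.Icc 1 n).erase l, (A j - B i)) *
          ∏ i ∈ Finset.Icc 1 (n - 2), (A j - D i)) /
        (A j * (B l - q ^ 2 * A j) *
          ∏ i ∈ (Finset.Icc 1 (n - 1)).erase j, (A j - A i) * (A j - q ^ 2 * A i))
    = ((q ^ 2)⁻¹ - 1) *
        ((∏ i ∈ (Finset.Icc 1 n).erase l, (B l - q ^ 2 * B i)) *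
          ∏ i ∈ Finset.Icc 1 (n - 2), ((q ^ 2)⁻¹ * B l - D i)) /
        (∏ i ∈ Finset.Icc 1 (n - 1), (B l - q ^ 2 * A i) * ((q ^ 2)⁻¹ * B l - q ^ 2 * A i))
      - ∑ j ∈ Finset.Icc 1 (n - 1),
        ((∏ i ∈ (Finset.Icc 1 n).erase l, (A j - (q ^ 2)⁻¹ * B i)) *
            ∏ i ∈ Finset.Icc 1 (n - 2), (A j - (q ^ 2)⁻¹ * D i)) /
          (A j * (q ^ 2 * A j - (q ^ 2)⁻¹ * B l) *
            ∏ i ∈ (Finset.Icc 1 (n - 1)).erase j, (A j - A i) * (A j - (q ^ 2)⁻¹ * A i)) :=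
  identity_A18_general q hq n hn l hl A B D hBlA hBlAq hAA hAAq
end
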